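/- Let θ = (θ_1,…,θ_q) be a stability parameter with θ_1 < 0 and θ_i ≥ 0 for all i > 1, and let A be a θ-stable finite graded algebra of dimension vector (d_1,…,d_q). Then A is generated in degree 1, i.e., A_{≥1}^k = A_{≥k} for all k ≥ 1. -/

import Mathlib

/-! The powers `I^(k) = A_{≥1}^k` of the augmentation ideal form an admissible family with
`I^(k) ⊆ A_{≥k}`. If `A_{≥1}^k ≠ A_{≥k}` for some `k`, this family does not dominate the tautological
one, so stability gives `Σ θ_i w_i > 0`. But `I^(k) ⊆ A_{≥k}` forces `w_1 = d_1` and `w_i ≤ i·d_i`,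
hence `Σ θ_i w_i ≤ Σ i·θ_i d_i = 0` because `θ_i ≥ 0` for `i > 1`. -/

open Module

variable {A : Type*}

/-- `A_{≥n}`: the sum of the graded pieces of degree at least `n`. -/
def Ageq [Ring A] [Algebra ℂ A] (𝒜 : ℕ → Submodule ℂ A) (n : ℕ) : Submodule ℂ A :=
  ⨆ i ∈ Set.Ici n, 𝒜 i

/-- An admissible family of two-sided ideals `A ⊇ I^(1) ⊇ I^(2) ⊇ …` with
`I^(k)·I^(ℓ) ⊆ I^(k+ℓ)`, vanishing eventually in each degree. -/
structure AdmissibleFamily [Ring A] [Algebra ℂ A] (𝒜 : ℕ → Submodule ℂ A)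
    (I : ℕ → Submodule ℂ A) : Prop where
  ideal_left : ∀ k, 1 ≤ k → ∀ a : A, ∀ x ∈ I k, a * x ∈ I k
  ideal_right : ∀ k, 1 ≤ k → ∀ a : A, ∀ x ∈ I k, x * a ∈ I k
  descending : ∀ k, 1 ≤ k → I (k + 1) ≤ I k
  mul_mem : ∀ k l, 1 ≤ k → 1 ≤ l → ∀ x ∈ I k, ∀ y ∈ I l, x * y ∈ I (k + l)
  eventually_zero : ∀ i, ∃ l, ∀ k, l ≤ k → I k ⊓ 𝒜 i = ⊥

/-- The family `I` dominates the tautological family `(A_{≥k})_k`. -/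
def Dominates [Ring A] [Algebra ℂ A] (𝒜 I : ℕ → Submodule ℂ A) : Prop :=
  ∀ k, 1 ≤ k → Ageq 𝒜 k ≤ I k

/-- The weight `w_i = Σ_{k≥1} dim I^(k)_i` of an admissible family of ideals,
computed with a cutoff `L` beyond which all `I^(k)_i` vanish. -/
noncomputable def weight [Ring A] [Algebra ℂ A] (𝒜 I : ℕ → Submodule ℂ A)
    (L i : ℕ) : ℕ :=
  ∑ k ∈ Finset.Icc 1 L, finrank ℂ ↥(I k ⊓ 𝒜 i)

/-- `A` is θ-stable: `Σ θ_i w_i > 0` for every non-trivial standard admissible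
family of ideals (one not dominating the tautological family). -/
def ThetaStable [Ring A] [Algebra ℂ A] (𝒜 : ℕ → Submodule ℂ A) (q : ℕ)
    (θ : ℕ → ℤ) : Prop :=
  ∀ I : ℕ → Submodule ℂ A, AdmissibleFamily 𝒜 I → I 1 ≠ ⊥ → ¬ Dominates 𝒜 I →
    ∀ L : ℕ, (∀ k, L ≤ k → ∀ i, I k ⊓ 𝒜 i = ⊥) →
      0 < ∑ i ∈ Finset.Icc 1 q, θ i * (weight 𝒜 I L i : ℤ)

/-- `A` is θ-semi-stable: `Σ θ_i w_i ≥ 0` for every non-trivial standard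
admissible family of ideals. -/
def ThetaSemiStable [Ring A] [Algebra ℂ A] (𝒜 : ℕ → Submodule ℂ A) (q : ℕ)
    (θ : ℕ → ℤ) : Prop :=
  ∀ I : ℕ → Submodule ℂ A, AdmissibleFamily 𝒜 I → I 1 ≠ ⊥ → ¬ Dominates 𝒜 I →
    ∀ L : ℕ, (∀ k, L ≤ k → ∀ i, I k ⊓ 𝒜 i = ⊥) →
      0 ≤ ∑ i ∈ Finset.Icc 1 q, θ i * (weight 𝒜 I L i : ℤ)

section Ageq

variable [Ring A] [Algebra ℂ A] (𝒜 : ℕ → Submodule ℂ A)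

theorem le_Ageq {m i : ℕ} (h : m ≤ i) : 𝒜 i ≤ Ageq 𝒜 m :=
  le_iSup₂ (f := fun i (_ : i ∈ Set.Ici m) => 𝒜 i) i h

theorem Ageq_antitone : Antitone (Ageq 𝒜) := fun _ _ h =>
  iSup₂_le fun _ hi => le_Ageq 𝒜 (h.trans hi)

theorem Ageq_mul_le [SetLike.GradedMonoid 𝒜] (m n : ℕ) :
    Ageq 𝒜 m * Ageq 𝒜 n ≤ Ageq 𝒜 (m + n) := by
  rw [Ageq, Ageq, iSup_subtype', iSup_subtype', Submodule.iSup_mul]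
  refine iSup_le fun i => ?_
  rw [Submodule.mul_iSup]
  refine iSup_le fun j => (le_Ageq 𝒜 (add_le_add i.2 j.2)).trans' ?_
  exact Submodule.mul_le.2 fun x hx y hy => SetLike.mul_mem_graded hx hy

theorem Ageq_pow_le [SetLike.GradedMonoid 𝒜] (n m : ℕ) :
    Ageq 𝒜 n ^ m ≤ Ageq 𝒜 (n * m) := by
  induction m with
  | zero => exact Submodule.one_le.2 (le_Ageq 𝒜 (i := 0) (by simp) SetLike.GradedOne.one_mem)
  | succ m ih =>
    calc Ageq 𝒜 n ^ (m + 1) = Ageq 𝒜 n ^ m * Ageq 𝒜 n := pow_succ _ m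
      _ ≤ Ageq 𝒜 (n * m) * Ageq 𝒜 n := mul_le_mul' ih le_rfl
      _ ≤ Ageq 𝒜 (n * (m + 1)) := (Ageq_mul_le 𝒜 _ _).trans_eq (by ring_nf)

theorem Ageq_zero [DirectSum.Decomposition 𝒜] : Ageq 𝒜 0 = ⊤ := by
  simpa [Ageq] using (DirectSum.Decomposition.isInternal 𝒜).submodule_iSup_eq_top

theorem Ageq_inf_eq_bot [DirectSum.Decomposition 𝒜] {m i : ℕ} (h : i < m) :
    Ageq 𝒜 m ⊓ 𝒜 i = ⊥ := by
  have hind := (DirectSum.Decomposition.isInternal 𝒜).submodule_iSupIndep i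
  have hle : Ageq 𝒜 m ≤ ⨆ j, ⨆ _ : j ≠ i, 𝒜 j :=
    iSup₂_le fun j hj => le_iSup₂ (f := fun j (_ : j ≠ i) => 𝒜 j) j (by grind)
  exact disjoint_iff.1 (hind.symm.mono_left hle)

theorem Ageq_one_pow_le [SetLike.GradedMonoid 𝒜] (k : ℕ) : Ageq 𝒜 1 ^ k ≤ Ageq 𝒜 k :=
  (Ageq_pow_le 𝒜 1 k).trans_eq (by rw [one_mul])

theorem Ageq_one_pow_inf_eq_bot [GradedRing 𝒜] {m i : ℕ} (h : i < m) :
    Ageq 𝒜 1 ^ m ⊓ 𝒜 i = ⊥ :=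
  eq_bot_mono (inf_le_inf_right _ (Ageq_one_pow_le 𝒜 m)) (Ageq_inf_eq_bot 𝒜 h)

theorem Ageq_one_pow_eq_of_eq_bot (h : Ageq 𝒜 1 = ⊥) {k : ℕ} (hk : 1 ≤ k) :
    Ageq 𝒜 1 ^ k = Ageq 𝒜 k := by
  have hAk : Ageq 𝒜 k ≤ Ageq 𝒜 1 := Ageq_antitone 𝒜 hk
  rw [h, le_bot_iff] at hAk
  rw [hAk, h, Submodule.bot_pow (by omega)]

theorem top_mul_Ageq_le [GradedRing 𝒜] (n : ℕ) : ⊤ * Ageq 𝒜 n ≤ Ageq 𝒜 n := by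
  simpa [← Ageq_zero 𝒜] using Ageq_mul_le 𝒜 0 n

theorem Ageq_mul_top_le [GradedRing 𝒜] (n : ℕ) : Ageq 𝒜 n * ⊤ ≤ Ageq 𝒜 n := by
  simpa [← Ageq_zero 𝒜] using Ageq_mul_le 𝒜 n 0

end Ageq

section Ideal

variable [Ring A] [Algebra ℂ A]

theorem top_mul_pow_le_of_top_mul_le {I : Submodule ℂ A} (hI : ⊤ * I ≤ I) {k : ℕ} (hk : 1 ≤ k) :
    ⊤ * I ^ k ≤ I ^ k := by
  obtain ⟨n, rfl⟩ := Nat.exists_eq_add_of_le' hk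
  rw [pow_succ', ← mul_assoc]
  exact mul_le_mul' hI le_rfl

theorem pow_mul_top_le_of_mul_top_le {I : Submodule ℂ A} (hI : I * ⊤ ≤ I) {k : ℕ} (hk : 1 ≤ k) :
    I ^ k * ⊤ ≤ I ^ k := by
  obtain ⟨n, rfl⟩ := Nat.exists_eq_add_of_le' hk
  rw [pow_succ, mul_assoc]
  exact mul_le_mul' le_rfl hI

theorem admissibleFamily_pow (𝒜 : ℕ → Submodule ℂ A) {I : Submodule ℂ A}
    (hleft : ⊤ * I ≤ I) (hright : I * ⊤ ≤ I)
    (hzero : ∀ i, ∃ l, ∀ k, l ≤ k → I ^ k ⊓ 𝒜 i = ⊥) :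
    AdmissibleFamily 𝒜 (I ^ ·) where
  ideal_left k hk a x hx :=
    top_mul_pow_le_of_top_mul_le hleft hk (Submodule.mul_mem_mul Submodule.mem_top hx)
  ideal_right k hk a x hx :=
    pow_mul_top_le_of_mul_top_le hright hk (Submodule.mul_mem_mul hx Submodule.mem_top)
  descending k hk := by
    rw [pow_succ]
    exact (mul_le_mul' le_rfl le_top).trans (pow_mul_top_le_of_mul_top_le hright hk)
  mul_mem k l _ _ x hx y hy := by
    rw [pow_add]
    exact Submodule.mul_mem_mul hx hy
  eventually_zero := hzero

end Ideal

theorem admissibleFamily_Ageq_one_pow [Ring A] [Algebra ℂ A] (𝒜 : ℕ → Submodule ℂ A)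
    [GradedRing 𝒜] : AdmissibleFamily 𝒜 (Ageq 𝒜 1 ^ ·) :=
  admissibleFamily_pow 𝒜 (top_mul_Ageq_le 𝒜 1) (Ageq_mul_top_le 𝒜 1) fun i =>
    ⟨i + 1, fun _ hm => Ageq_one_pow_inf_eq_bot 𝒜 hm⟩

section Weight

variable [Ring A] [Algebra ℂ A] (𝒜 I : ℕ → Submodule ℂ A)

theorem weight_le_mul_finrank {i : ℕ} [FiniteDimensional ℂ (𝒜 i)]
    (hI : ∀ k, i < k → I k ⊓ 𝒜 i = ⊥) (L : ℕ) :
    weight 𝒜 I L i ≤ i * finrank ℂ (𝒜 i) := by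
  have hsupp : ∀ k ∈ Finset.Icc 1 L, finrank ℂ ↥(I k ⊓ 𝒜 i) ≠ 0 → k ≤ i := by
    intro k _ hk
    by_contra! hik
    simp [hI k hik] at hk
  calc weight 𝒜 I L i
      = ∑ k ∈ (Finset.Icc 1 L).filter (· ≤ i), finrank ℂ ↥(I k ⊓ 𝒜 i) :=
        (Finset.sum_filter_of_ne hsupp).symm
    _ ≤ ∑ k ∈ (Finset.Icc 1 L).filter (· ≤ i), finrank ℂ (𝒜 i) :=
        Finset.sum_le_sum fun _ _ => Submodule.finrank_mono inf_le_right
    _ ≤ i * finrank ℂ (𝒜 i) := by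
        rw [Finset.sum_const, smul_eq_mul]
        refine Nat.mul_le_mul_right _ ((Finset.card_le_card ?_).trans (Nat.card_Icc 1 i).le)
        intro k
        simp only [Finset.mem_filter, Finset.mem_Icc]
        omega

theorem finrank_inf_le_weight {k L : ℕ} (hk : 1 ≤ k) (hkL : k ≤ L) (i : ℕ) :
    finrank ℂ ↥(I k ⊓ 𝒜 i) ≤ weight 𝒜 I L i :=
  Finset.single_le_sum (f := fun k => finrank ℂ ↥(I k ⊓ 𝒜 i)) (fun _ _ => Nat.zero_le _)
    (Finset.mem_Icc.2 ⟨hk, hkL⟩)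

end Weight

theorem weight_Ageq_one_pow_one [Ring A] [Algebra ℂ A] (𝒜 : ℕ → Submodule ℂ A) [GradedRing 𝒜]
    [FiniteDimensional ℂ (𝒜 1)] {L : ℕ} (hL : 1 ≤ L) :
    weight 𝒜 (Ageq 𝒜 1 ^ ·) L 1 = finrank ℂ (𝒜 1) := by
  refine (weight_le_mul_finrank 𝒜 _ (fun _ => Ageq_one_pow_inf_eq_bot 𝒜) L).trans_eq (one_mul _)
    |>.antisymm ?_
  calc finrank ℂ (𝒜 1) = finrank ℂ ↥(Ageq 𝒜 1 ^ 1 ⊓ 𝒜 1) := by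
        rw [pow_one, inf_eq_right.2 (le_Ageq 𝒜 le_rfl)]
    _ ≤ _ := finrank_inf_le_weight 𝒜 _ le_rfl hL 1

theorem sum_mul_le_sum_mul_of_eq_of_le (q : ℕ) (θ w d : ℕ → ℤ) (hθ : ∀ i, 1 < i → 0 ≤ θ i)
    (h1 : w 1 = d 1) (hw : ∀ i, 1 < i → w i ≤ i * d i) :
    ∑ i ∈ Finset.Icc 1 q, θ i * w i ≤ ∑ i ∈ Finset.Icc 1 q, (i : ℤ) * θ i * d i := by
  refine Finset.sum_le_sum fun i hi => ?_
  obtain rfl | hi1 := (Finset.mem_Icc.1 hi).1.eq_or_lt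
  · simp [h1]
  · calc θ i * w i ≤ θ i * (i * d i) := mul_le_mul_of_nonneg_left (hw i hi1) (hθ i hi1)
      _ = i * θ i * d i := by ring

theorem theta_stable_generated_in_degree_one_general [Ring A] [Algebra ℂ A]
    (𝒜 : ℕ → Submodule ℂ A) [GradedAlgebra 𝒜] [∀ i, FiniteDimensional ℂ ↥(𝒜 i)]
    (q : ℕ) (hbound : ∀ i, q < i → 𝒜 i = ⊥)
    (θ : ℕ → ℤ)
    (hparam2 : ∑ i ∈ Finset.Icc 1 q, (i : ℤ) * θ i * (finrank ℂ ↥(𝒜 i) : ℤ) = 0)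
    (hθ : ∀ i, 1 < i → 0 ≤ θ i)
    (hstable : ThetaStable 𝒜 q θ) :
    ∀ k, 1 ≤ k → (Ageq 𝒜 1) ^ k = Ageq 𝒜 k := by
  intro k hk
  by_contra hne
  have hnontriv : Ageq 𝒜 1 ^ 1 ≠ ⊥ := fun h =>
    hne (Ageq_one_pow_eq_of_eq_bot 𝒜 (by rwa [pow_one] at h) hk)
  have hnd : ¬ Dominates 𝒜 (Ageq 𝒜 1 ^ ·) := fun hdom =>
    hne ((Ageq_one_pow_le 𝒜 k).antisymm (hdom k hk))
  have hcut : ∀ m, q + 1 ≤ m → ∀ i, Ageq 𝒜 1 ^ m ⊓ 𝒜 i = ⊥ := fun m hm i => by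
    by_cases hi : i ≤ q
    · exact Ageq_one_pow_inf_eq_bot 𝒜 (by omega)
    · simp [hbound i (by omega)]
  have hpos := hstable _ (admissibleFamily_Ageq_one_pow 𝒜) hnontriv hnd (q + 1) hcut
  have hle := sum_mul_le_sum_mul_of_eq_of_le q θ (fun i => weight 𝒜 (Ageq 𝒜 1 ^ ·) (q + 1) i)
    (fun i => finrank ℂ (𝒜 i)) hθ (by simp [weight_Ageq_one_pow_one 𝒜 (by omega : 1 ≤ q + 1)])
    fun i _ => by
      exact_mod_cast weight_le_mul_finrank 𝒜 _ (fun _ => Ageq_one_pow_inf_eq_bot 𝒜) _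
  linarith

/-- if `θ` is a stability parameter with `θ₁ < 0` and `θ_i ≥ 0` for
`i > 1`, then every θ-stable finite graded algebra `A` of dimension vector
`(d₁,…,d_q)` is generated in degree 1: `(A_{≥1})^k = A_{≥k}` for all `k ≥ 1`. -/
theorem theta_stable_generated_in_degree_one [Ring A] [Algebra ℂ A]
    (𝒜 : ℕ → Submodule ℂ A) [GradedAlgebra 𝒜] [∀ i, FiniteDimensional ℂ ↥(𝒜 i)]
    (q : ℕ) (hq : 1 ≤ q) (hbound : ∀ i, q < i → 𝒜 i = ⊥)
    (hconn : 𝒜 0 = Submodule.span ℂ {1})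
    (hdpos : ∀ i, 1 ≤ i → i ≤ q → 0 < finrank ℂ ↥(𝒜 i))
    (θ : ℕ → ℤ)
    (hparam1 : ∑ i ∈ Finset.Icc 1 q, θ i * (finrank ℂ ↥(𝒜 i) : ℤ) < 0)
    (hparam2 : ∑ i ∈ Finset.Icc 1 q, (i : ℤ) * θ i * (finrank ℂ ↥(𝒜 i) : ℤ) = 0)
    (hθ1 : θ 1 < 0) (hθ : ∀ i, 1 < i → 0 ≤ θ i)
    (hstable : ThetaStable 𝒜 q θ) :
    ∀ k, 1 ≤ k → (Ageq 𝒜 1) ^ k = Ageq 𝒜 k :=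
  theta_stable_generated_in_degree_one_general 𝒜 q hbound θ hparam2 hθ hstable
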